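/- For t ∈ ℂ let W̃₃(t) be the bracket on ℂ⁵ given by [e₃,e₄] = e₂, [e₄,e₃] = −e₂, [e₃,e₅] = e₁, [e₅,e₃] = −e₁, [e₄,e₅] = e₃, [e₅,e₄] = −e₃, [e₅,e₅] = t·e₂ (the deformation of the nilpotent Lie algebra W₃ along the 2-cocycle φ(e₅,e₅) = e₂). Then for all t₁, t₂ ∈ ℂ with t₁ ≠ 0 and t₂ ≠ 0, the brackets W̃₃(t₁) and W̃₃(t₂) are isomorphic; in particular the family W̃₃(t), t ≠ 0, is a single nilpotent Leibniz algebra up to isomorphism. -/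
import Mathlib


/-- The bracket `W̃₃(t)` on `ℂ⁵`: `[e₃,e₄] = e₂`, `[e₄,e₃] = -e₂`,
`[e₃,e₅] = e₁`, `[e₅,e₃] = -e₁`, `[e₄,e₅] = e₃`, `[e₅,e₄] = -e₃`,
`[e₅,e₅] = t·e₂` (the deformation of `W₃` along the 2-cocycle
`φ(e₅,e₅) = e₂`), in coordinates. -/
def W3tildeFamily (t : ℂ) (x y : Fin 5 → ℂ) : Fin 5 → ℂ :=
  ![x 2 * y 4 - x 4 * y 2,
    x 2 * y 3 - x 3 * y 2 + t * (x 4 * y 4),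
    x 3 * y 4 - x 4 * y 3,
    0,
    0]

/-- Diagonal scaling linear equivalence on `Fin 5 → ℂ`. -/
noncomputable def diagEquiv (d : Fin 5 → ℂ) (hd : ∀ i, d i ≠ 0) :
    (Fin 5 → ℂ) ≃ₗ[ℂ] (Fin 5 → ℂ) where
  toFun x := fun i => d i * x i
  invFun x := fun i => (d i)⁻¹ * x i
  map_add' x y := by funext i; simp [mul_add]
  map_smul' c x := by funext i; simp [smul_eq_mul]; ring
  left_inv x := by
    funext i; show (d i)⁻¹ * (d i * x i) = x i
    rw [← mul_assoc, inv_mul_cancel₀ (hd i), one_mul]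
  right_inv x := by
    funext i; show d i * ((d i)⁻¹ * x i) = x i
    rw [← mul_assoc, mul_inv_cancel₀ (hd i), one_mul]

/-- For all `t₁ ≠ 0` and `t₂ ≠ 0`, the brackets `W̃₃(t₁)` and `W̃₃(t₂)` are
isomorphic; in particular the family `W̃₃(t)`, `t ≠ 0`, is a single nilpotent
Leibniz algebra up to isomorphism. -/
theorem W3tildeFamily_iso :
    ∀ t₁ t₂ : ℂ, t₁ ≠ 0 → t₂ ≠ 0 →
      ∃ T : (Fin 5 → ℂ) ≃ₗ[ℂ] (Fin 5 → ℂ),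
        ∀ x y : Fin 5 → ℂ, T (W3tildeFamily t₁ x y) = W3tildeFamily t₂ (T x) (T y) := by
  intro t₁ t₂ h₁ h₂
  have hsne : t₁ / t₂ ≠ 0 := div_ne_zero h₁ h₂
  refine ⟨diagEquiv ![(t₁ / t₂) ^ 2, t₁ / t₂, t₁ / t₂, 1, t₁ / t₂] ?_, ?_⟩
  · intro i
    fin_cases i <;> simp [pow_ne_zero, hsne]
  · intro x y
    funext i
    fin_cases i <;> simp [diagEquiv, W3tildeFamily] <;>
      (first | ring1 | (field_simp [h₂]))
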